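/- arXiv:1608.07930 — 2 statements merged into one kernel-verified Lean document; each statement's English description precedes it below -/
import Mathlib

section
/- For 1 < α ≤ 2, the WSGD coefficients satisfy 1 ≥ w_0^{(α)} ≥ w_3^{(α)} ≥ w_4^{(α)} ≥ w_5^{(α)} ≥ … ≥ 0, i.e., the sequence (w_k^{(α)})_{k≥3} is nonnegative, nonincreasing, and bounded above by w_0^{(α)} = α/2 ≤ 1. -/
open scoped BigOperators Real

noncomputable def gbinom (α : ℝ) (k : ℕ) : ℝ :=
  (∏ i ∈ Finset.range k, (α - i)) / (Nat.factorial k)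

noncomputable def gcoef (α : ℝ) (k : ℕ) : ℝ := (-1) ^ k * gbinom α k

noncomputable def wcoef (α : ℝ) : ℕ → ℝ
  | 0 => α / 2 * gcoef α 0
  | (k + 1) => α / 2 * gcoef α (k + 1) + (2 - α) / 2 * gcoef α k

lemma gbinom_succ (α : ℝ) (k : ℕ) :
    gbinom α (k + 1) = gbinom α k * (α - k) / (k + 1) := by
  unfold gbinom
  rw [Finset.prod_range_succ, Nat.factorial_succ]
  have h1 : (Nat.factorial k : ℝ) ≠ 0 := Nat.cast_ne_zero.mpr (Nat.factorial_ne_zero k)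
  have h2 : ((k : ℝ) + 1) ≠ 0 := by positivity
  push_cast
  field_simp
  all_goals (try ring)
  all_goals tauto

lemma gcoef_succ (α : ℝ) (k : ℕ) :
    gcoef α (k + 1) = gcoef α k * (((k : ℝ) - α) / (k + 1)) := by
  unfold gcoef
  rw [gbinom_succ, pow_succ]
  ring

lemma gcoef_two (α : ℝ) : gcoef α 2 = α * (α - 1) / 2 := by
  unfold gcoef gbinom
  rw [Finset.prod_range_succ, Finset.prod_range_succ]
  norm_num [Nat.factorial]

lemma factor_nonneg (α : ℝ) (hα2 : α ≤ 2) (n : ℕ) (hn : 2 ≤ n) :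
    0 ≤ ((n : ℝ) - α) / (n + 1) := by
  apply div_nonneg
  · have : (2 : ℝ) ≤ (n : ℝ) := by exact_mod_cast hn
    linarith
  · positivity

lemma factor_le_one (α : ℝ) (hα : 1 < α) (n : ℕ) :
    ((n : ℝ) - α) / (n + 1) ≤ 1 := by
  rw [div_le_one (by positivity)]
  linarith

lemma gcoef_nonneg (α : ℝ) (hα : 1 < α) (hα2 : α ≤ 2) (k : ℕ) (hk : 2 ≤ k) :
    0 ≤ gcoef α k := by
  induction k, hk using Nat.le_induction with
  | base =>
    rw [gcoef_two]; nlinarith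
  | succ n hn ih =>
    rw [gcoef_succ]
    exact mul_nonneg ih (factor_nonneg α hα2 n hn)

lemma gcoef_mono (α : ℝ) (hα : 1 < α) (hα2 : α ≤ 2) (k : ℕ) (hk : 2 ≤ k) :
    gcoef α (k + 1) ≤ gcoef α k := by
  rw [gcoef_succ]
  have h0 := gcoef_nonneg α hα hα2 k hk
  nlinarith [factor_le_one α hα k, factor_nonneg α hα2 k hk]

theorem stmt3 (α : ℝ) (hα : 1 < α) (hα2 : α ≤ 2) :
    wcoef α 0 = α / 2 ∧ wcoef α 0 ≤ 1 ∧
    wcoef α 3 ≤ wcoef α 0 ∧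
    (∀ k : ℕ, 3 ≤ k → 0 ≤ wcoef α k) ∧
    (∀ k : ℕ, 3 ≤ k → wcoef α (k + 1) ≤ wcoef α k) := by
  have hg0 : gcoef α 0 = 1 := by simp [gcoef, gbinom]
  have hw0 : wcoef α 0 = α / 2 := by rw [show wcoef α 0 = α / 2 * gcoef α 0 from rfl, hg0]; ring
  have hg2 := gcoef_two α
  have hg3 : gcoef α 3 = α * (α - 1) / 2 * ((2 - α) / 3) := by
    rw [show (3 : ℕ) = 2 + 1 from rfl, gcoef_succ, hg2]; norm_num
  refine ⟨hw0, by rw [hw0]; linarith, ?_, ?_, ?_⟩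
  · rw [hw0, show wcoef α 3 = α / 2 * gcoef α 3 + (2 - α) / 2 * gcoef α 2 from rfl, hg2, hg3]
    nlinarith [sq_nonneg (α - 1), sq_nonneg (2 - α), sq_nonneg (α - 2)]
  · intro k hk
    obtain ⟨m, rfl⟩ := Nat.exists_eq_add_of_le hk
    have h1 : 2 ≤ 2 + m := by omega
    have h2 : 2 ≤ 3 + m := by omega
    rw [show 3 + m = (2 + m) + 1 by omega, show wcoef α (2 + m + 1) =
      α / 2 * gcoef α (2 + m + 1) + (2 - α) / 2 * gcoef α (2 + m) from rfl]
    have := gcoef_nonneg α hα hα2 (2 + m) h1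
    have := gcoef_nonneg α hα hα2 (2 + m + 1) (by omega)
    nlinarith
  · intro k hk
    obtain ⟨m, rfl⟩ := Nat.exists_eq_add_of_le hk
    rw [show 3 + m = (2 + m) + 1 by omega, show wcoef α (2 + m + 1) =
      α / 2 * gcoef α (2 + m + 1) + (2 - α) / 2 * gcoef α (2 + m) from rfl,
      show wcoef α (2 + m + 1 + 1) =
      α / 2 * gcoef α (2 + m + 1 + 1) + (2 - α) / 2 * gcoef α (2 + m + 1) from rfl]
    have h1 := gcoef_mono α hα hα2 (2 + m) (by omega)
    have h2 := gcoef_mono α hα hα2 (2 + m + 1) (by omega)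
    nlinarith
end

section
/- For 1 < α < 2 and every m ≥ 2, |w_1^{(α)}| > (w_0^{(α)} + w_2^{(α)}) + w_3^{(α)} + w_4^{(α)} + ⋯ + w_{m}^{(α)}, i.e., -w_1^{(α)} strictly dominates the sum of all other coefficients up to index m (with w_0 and w_2 grouped); moreover w_0^{(α)} + w_2^{(α)} > 0. -/
open scoped BigOperators Real

lemma my_prod_shift (α : ℝ) (k : ℕ) :
    α * ∏ i ∈ Finset.range k, (α - 1 - i) = (∏ i ∈ Finset.range k, (α - i)) * (α - k) := by
  induction k with
  | zero => simp
  | succ n ih =>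
    rw [Finset.prod_range_succ, Finset.prod_range_succ]
    push_cast
    linear_combination (α - 1 - (n:ℝ)) * ih

lemma my_gbinom_succ (β : ℝ) (k : ℕ) :
    gbinom β (k + 1) = gbinom β k * (β - k) / (k + 1) := by
  unfold gbinom
  rw [Finset.prod_range_succ, Nat.factorial_succ]
  have h : (Nat.factorial k : ℝ) ≠ 0 := Nat.cast_ne_zero.mpr (Nat.factorial_ne_zero k)
  have h2 : ((k : ℝ) + 1) ≠ 0 := by positivity
  push_cast
  field_simp
  try exact Or.inl trivial

lemma my_key (α : ℝ) (k : ℕ) : gbinom α k * (α - k) = α * gbinom (α - 1) k := by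
  unfold gbinom
  have h : (Nat.factorial k : ℝ) ≠ 0 := Nat.cast_ne_zero.mpr (Nat.factorial_ne_zero k)
  field_simp
  linarith [my_prod_shift α k]

lemma my_pascal (α : ℝ) (k : ℕ) :
    gbinom α (k + 1) = gbinom (α - 1) (k + 1) + gbinom (α - 1) k := by
  rw [my_gbinom_succ, my_gbinom_succ]
  have h2 : ((k : ℝ) + 1) ≠ 0 := by positivity
  field_simp
  have := my_key α k
  ring_nf
  ring_nf at this
  linarith

lemma my_sumg (α : ℝ) (m : ℕ) :
    ∑ k ∈ Finset.range (m + 1), gcoef α k = (-1) ^ m * gbinom (α - 1) m := by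
  induction m with
  | zero => simp [gcoef, gbinom]
  | succ n ih =>
    rw [Finset.sum_range_succ, ih]
    unfold gcoef
    rw [my_pascal]
    ring

lemma my_prod_sign (α : ℝ) (hα : 1 < α) (hα2 : α < 2) (m : ℕ) :
    0 < (-1) ^ m * ∏ i ∈ Finset.range (m + 1), (α - 1 - i) := by
  induction m with
  | zero => simpa using by linarith
  | succ n ih =>
    rw [Finset.prod_range_succ]
    have hneg : α - 1 - (n + 1 : ℕ) < 0 := by push_cast; linarith [Nat.cast_nonneg (α := ℝ) n]
    have : (-1 : ℝ) ^ (n + 1) * ((∏ i ∈ Finset.range (n + 1), (α - 1 - i)) * (α - 1 - (n + 1 : ℕ)))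
        = ((-1) ^ n * ∏ i ∈ Finset.range (n + 1), (α - 1 - i)) * (-(α - 1 - (n + 1 : ℕ))) := by
      ring
    rw [this]
    exact mul_pos ih (by linarith)

lemma my_S_neg (α : ℝ) (hα : 1 < α) (hα2 : α < 2) (m : ℕ) (hm : 1 ≤ m) :
    (-1) ^ m * gbinom (α - 1) m < 0 := by
  obtain ⟨n, rfl⟩ := Nat.exists_eq_add_of_le hm
  have hp := my_prod_sign α hα hα2 n
  rw [show 1 + n = n + 1 from by omega]
  unfold gbinom
  have hf : (0 : ℝ) < (Nat.factorial (n + 1) : ℝ) := by positivity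
  rw [mul_div_assoc']
  apply div_neg_of_neg_of_pos _ hf
  rw [pow_succ]
  nlinarith

lemma my_sumw (α : ℝ) (n : ℕ) :
    ∑ k ∈ Finset.range (n + 2), wcoef α k =
      α / 2 * ∑ k ∈ Finset.range (n + 2), gcoef α k
        + (2 - α) / 2 * ∑ k ∈ Finset.range (n + 1), gcoef α k := by
  induction n with
  | zero =>
    simp [Finset.sum_range_succ, wcoef]
    try ring
  | succ n ih =>
    rw [Finset.sum_range_succ, ih, Finset.sum_range_succ (n := n + 2),
      Finset.sum_range_succ (n := n + 1)]
    show _ + (α / 2 * gcoef α (n + 2) + (2 - α) / 2 * gcoef α (n + 1)) = _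
    ring

theorem stmt5 (α : ℝ) (hα : 1 < α) (hα2 : α < 2) :
    (∀ m : ℕ, 2 ≤ m →
      (wcoef α 0 + wcoef α 2) + ∑ k ∈ Finset.Icc 3 m, wcoef α k < |wcoef α 1|) ∧
    0 < wcoef α 0 + wcoef α 2 := by
  have hg0 : gcoef α 0 = 1 := by simp [gcoef, gbinom]
  have hg1 : gcoef α 1 = -α := by simp [gcoef, gbinom]
  have hw1 : wcoef α 1 = (2 - α - α ^ 2) / 2 := by
    show α / 2 * gcoef α 1 + (2 - α) / 2 * gcoef α 0 = _
    rw [hg0, hg1]; ring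
  have hw1neg : wcoef α 1 < 0 := by rw [hw1]; nlinarith
  have habs : |wcoef α 1| = -wcoef α 1 := abs_of_neg hw1neg
  have hg2 : gcoef α 2 = α * (α - 1) / 2 := by
    simp [gcoef, gbinom, Finset.prod_range_succ, Nat.factorial]
    try ring
  have hw02 : wcoef α 0 + wcoef α 2 = α * (α ^ 2 + α - 2) / 4 := by
    show α / 2 * gcoef α 0 + (α / 2 * gcoef α 2 + (2 - α) / 2 * gcoef α 1) = _
    rw [hg0, hg1, hg2]; ring
  constructor
  · intro m hm
    obtain ⟨n, rfl⟩ := Nat.exists_eq_add_of_le hm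
    -- total sum is negative
    have hT : ∑ k ∈ Finset.range (2 + n + 1), wcoef α k < 0 := by
      have h2 : (2 + n + 1) = (n + 1) + 2 := by omega
      rw [h2, my_sumw]
      rw [my_sumg, my_sumg]
      have hS1 := my_S_neg α hα hα2 (n + 2) (by omega)
      have hS2 := my_S_neg α hα hα2 (n + 1) (by omega)
      have h4 : α / 2 * ((-1) ^ (n + 2) * gbinom (α - 1) (n + 2)) < 0 :=
        mul_neg_of_pos_of_neg (by linarith) hS1
      have h5 : (2 - α) / 2 * ((-1) ^ (n + 1) * gbinom (α - 1) (n + 1)) < 0 :=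
        mul_neg_of_pos_of_neg (by linarith) hS2
      have h6 : (n + 1 + 2) = n + 2 + 1 := by omega
      rw [show (n + 1 + 1) = n + 2 from by omega]
      linarith
    -- split the sum
    have hsplit : ∑ k ∈ Finset.range (2 + n + 1), wcoef α k =
        (wcoef α 0 + wcoef α 1 + wcoef α 2) + ∑ k ∈ Finset.Icc 3 (2 + n), wcoef α k := by
      have : Finset.Icc 3 (2 + n) = Finset.Ico 3 (2 + n + 1) := by
        rw [Finset.Ico_add_one_right_eq_Icc]
      rw [this, Finset.range_eq_Ico,
        ← Finset.sum_Ico_consecutive (m := 0) (n := 3) (k := 2 + n + 1) _ (by omega) (by omega)]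
      congr 1
      show ∑ k ∈ Finset.range 3, wcoef α k = _
      rw [Finset.sum_range_succ, Finset.sum_range_succ, Finset.sum_range_one]
    rw [habs]
    have := hsplit ▸ hT
    linarith
  · rw [hw02]; nlinarith
end
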